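/- arXiv:2311.03708 — 2 statements merged into one kernel-verified Lean document; each statement's English description precedes it below -/
import Mathlib

section
/- Let Q be a residually finite quandle such that for each n ≥ 1, Q has only finitely many congruences of index n. Then the automorphism group Aut(Q) is a residually finite group: for any two distinct quandle automorphisms f, g of Q there exist a finite group G and a group homomorphism Φ : Aut(Q) → G with Φ(f) ≠ Φ(g). -/
open Quandles

/-- A quandle homomorphism: a map preserving the quandle operation. -/
def IsQdlHom {A B : Type} [Shelf A] [Shelf B] (f : A → B) : Prop :=
  ∀ a b : A, f (a ◃ b) = f a ◃ f b

/-- A congruence on a quandle: an equivalence relation compatible with `◃` and `◃⁻¹`. -/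
def IsQdlCong {Q : Type} [Quandle Q] (α : Setoid Q) : Prop :=
  ∀ a b c d : Q, α.r a b → α.r c d →
    α.r (a ◃ c) (b ◃ d) ∧ α.r (a ◃⁻¹ c) (b ◃⁻¹ d)

/-- A fully invariant congruence: invariant under all quandle endomorphisms. -/
def IsFullyInvariant {Q : Type} [Quandle Q] (α : Setoid Q) : Prop :=
  ∀ f : Q → Q, IsQdlHom f → ∀ a b : Q, α.r a b → α.r (f a) (f b)

/-- A residually finite quandle. -/
def QdlResiduallyFinite (Q : Type) [Quandle Q] : Prop :=
  ∀ a b : Q, a ≠ b → ∃ (F : Type) (_ : Quandle F) (_ : Finite F) (f : Q → F),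
    IsQdlHom f ∧ f a ≠ f b

private lemma symm_isQdlHom {Q : Type} [Quandle Q] (f : Q ≃ Q) (hf : IsQdlHom (⇑f)) :
    IsQdlHom (⇑f.symm) := fun a b => by
  apply f.injective
  rw [hf (f.symm a) (f.symm b), f.apply_symm_apply, f.apply_symm_apply, f.apply_symm_apply]

/-- The automorphism group of a quandle: bijective quandle endomorphisms under composition. -/
def QdlAut (Q : Type) [Quandle Q] : Type := {f : Q ≃ Q // IsQdlHom (⇑f)}

instance (Q : Type) [Quandle Q] : Group (QdlAut Q) where
  mul f g := ⟨g.1.trans f.1, fun a b => by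
    show f.1 (g.1 (a ◃ b)) = f.1 (g.1 a) ◃ f.1 (g.1 b)
    rw [g.2 a b]; exact f.2 _ _⟩
  one := ⟨Equiv.refl Q, fun _ _ => rfl⟩
  inv f := ⟨f.1.symm, symm_isQdlHom f.1 f.2⟩
  mul_assoc f g h := Subtype.ext (Equiv.ext fun _ => rfl)
  one_mul f := Subtype.ext (Equiv.ext fun _ => rfl)
  mul_one f := Subtype.ext (Equiv.ext fun _ => rfl)
  inv_mul_cancel f := Subtype.ext (Equiv.ext fun x => f.1.symm_apply_apply x)

private lemma hom_invAct {A B : Type} [Rack A] [Rack B] (f : A → B)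
    (hf : ∀ a b : A, f (a ◃ b) = f a ◃ f b) (a b : A) :
    f (a ◃⁻¹ b) = f a ◃⁻¹ f b := by
  rw [← Rack.left_cancel (f a), Rack.act_invAct_eq, ← hf, Rack.act_invAct_eq]

/-- For a residually finite quandle with only finitely many congruences of each index
`n ≥ 1`, the automorphism group is residually finite. -/
theorem stmt_3 {Q : Type} [Quandle Q]
    (hrf : QdlResiduallyFinite Q)
    (hfin : ∀ n : ℕ, 1 ≤ n →
      {α : Setoid Q | IsQdlCong α ∧ Nat.card (Quotient α) = n}.Finite) :
    ∀ f g : QdlAut Q, f ≠ g →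
      ∃ (G : Type) (_ : Group G) (_ : Finite G) (Φ : QdlAut Q →* G), Φ f ≠ Φ g := by
  intro f g hfg
  have hx : ∃ x : Q, f.1 x ≠ g.1 x := by
    by_contra h
    push_neg at h
    exact hfg (Subtype.ext (Equiv.ext h))
  obtain ⟨x, hx⟩ := hx
  obtain ⟨F, _, _, p, hp, hne⟩ := hrf _ _ hx
  set α : Setoid Q := Setoid.ker p with hα
  have hαcong : IsQdlCong α := by
    intro a b c d hab hcd
    have hab' : p a = p b := hab
    have hcd' : p c = p d := hcd
    constructor
    · show p (a ◃ c) = p (b ◃ d)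
      rw [hp, hp, hab', hcd']
    · show p (a ◃⁻¹ c) = p (b ◃⁻¹ d)
      rw [hom_invAct p hp, hom_invAct p hp, hab', hcd']
  have hαfin : Finite (Quotient α) := by
    have hinj : Function.Injective (Quotient.lift p (fun a b h => h) : Quotient α → F) := by
      intro q₁ q₂
      induction q₁ using Quotient.ind
      induction q₂ using Quotient.ind
      intro h
      exact Quotient.sound h
    exact Finite.of_injective _ hinj
  set n : ℕ := Nat.card (Quotient α) with hn
  have hn1 : 1 ≤ n := by
    have : Nonempty (Quotient α) := ⟨⟦x⟧⟩
    exact Nat.one_le_iff_ne_zero.mpr (Nat.card_ne_zero.mpr ⟨this, hαfin⟩)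
  set S : Set (Setoid Q) := {γ : Setoid Q | IsQdlCong γ ∧ Nat.card (Quotient γ) = n} with hS
  have hSfin : S.Finite := hfin n hn1
  have hαS : α ∈ S := ⟨hαcong, rfl⟩
  have hSquotfin : ∀ γ ∈ S, Finite (Quotient γ) := by
    intro γ hγ
    exact Nat.finite_of_card_ne_zero (by rw [hγ.2]; omega)
  -- the intersection congruence
  set β : Setoid Q := ⟨fun a b => ∀ γ ∈ S, γ.r a b,
    ⟨fun a γ _ => γ.refl a, fun h γ hγ => γ.symm (h γ hγ),
      fun h₁ h₂ γ hγ => γ.trans (h₁ γ hγ) (h₂ γ hγ)⟩⟩ with hβ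
  have hβfin : Finite (Quotient β) := by
    have := hSfin.to_subtype
    have : ∀ γ : S, Finite (Quotient γ.1) := fun γ => hSquotfin γ.1 γ.2
    have hinj : Function.Injective
        (fun q : Quotient β => fun γ : S =>
          Quotient.lift (fun a => (Quotient.mk γ.1 a : Quotient γ.1))
            (fun a b h => Quotient.sound ((show ∀ δ ∈ S, δ.r a b from h) γ.1 γ.2)) q) := by
      intro q₁ q₂
      induction q₁ using Quotient.ind
      induction q₂ using Quotient.ind
      intro h
      refine Quotient.sound fun γ hγ => ?_
      exact Quotient.exact (congrFun h ⟨γ, hγ⟩)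
    exact Finite.of_injective _ hinj
  -- β is invariant under all automorphisms
  have hinv : ∀ φ : QdlAut Q, ∀ a b : Q, β.r a b → β.r (φ.1 a) (φ.1 b) := by
    intro φ a b hab γ hγ
    set γ' : Setoid Q := ⟨fun u v => γ.r (φ.1 u) (φ.1 v),
      ⟨fun u => γ.refl _, fun h => γ.symm h, fun h₁ h₂ => γ.trans h₁ h₂⟩⟩ with hγ'
    have hγ'S : γ' ∈ S := by
      constructor
      · intro u v w z huv hwz
        constructor
        · show γ.r (φ.1 (u ◃ w)) (φ.1 (v ◃ z))
          rw [φ.2, φ.2]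
          exact (hγ.1 _ _ _ _ huv hwz).1
        · show γ.r (φ.1 (u ◃⁻¹ w)) (φ.1 (v ◃⁻¹ z))
          rw [hom_invAct _ φ.2, hom_invAct _ φ.2]
          exact (hγ.1 _ _ _ _ huv hwz).2
      · have : Quotient γ' ≃ Quotient γ :=
          Quotient.congr φ.1 (fun _ _ => Iff.rfl)
        rw [Nat.card_congr this]
        exact hγ.2
    exact hab γ' hγ'S
  -- the permutation action on the finite quotient
  have hmapwd : ∀ φ : QdlAut Q, ∀ a b : Q, β.r a b → β.r (φ.1 a) (φ.1 b) := hinv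
  let toPerm : QdlAut Q → Equiv.Perm (Quotient β) := fun φ =>
    { toFun := Quotient.map φ.1 (hinv φ)
      invFun := Quotient.map φ.1.symm (hinv φ⁻¹)
      left_inv := fun q => by
        induction q using Quotient.ind
        simp only [Quotient.map_mk, Equiv.symm_apply_apply]
      right_inv := fun q => by
        induction q using Quotient.ind
        simp only [Quotient.map_mk, Equiv.apply_symm_apply] }
  have hmul : ∀ φ ψ : QdlAut Q, toPerm (φ * ψ) = toPerm φ * toPerm ψ := by
    intro φ ψ
    ext q
    induction q using Quotient.ind
    rfl
  refine ⟨Equiv.Perm (Quotient β), inferInstance, inferInstance,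
    MonoidHom.mk' toPerm hmul, ?_⟩
  intro hΦ
  have h1 : toPerm f ⟦x⟧ = toPerm g ⟦x⟧ := by
    have : toPerm f = toPerm g := hΦ
    rw [this]
  have h2 : β.r (f.1 x) (g.1 x) := Quotient.exact h1
  have h3 : α.r (f.1 x) (g.1 x) := h2 α hαS
  exact hne h3
end

section
/- Let Q be a compact topological quandle such that for each n ≥ 1 there are only finitely many open congruences on Q of index n. Then every open congruence on Q contains an open congruence that is fully invariant under all continuous endomorphisms, i.e., an open congruence ρ such that (a,b) ∈ ρ implies (f(a), f(b)) ∈ ρ for every continuous quandle endomorphism f of Q. -/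
open Quandles

/-- A topological quandle: the quandle operation is (jointly) continuous and the
action of each element is a homeomorphism (i.e. its inverse `y ◃⁻¹ ·` is continuous). -/
structure IsTopQuandle (Q : Type) [Quandle Q] [TopologicalSpace Q] : Prop where
  continuous_act : Continuous fun p : Q × Q => p.1 ◃ p.2
  continuous_invAct : ∀ y : Q, Continuous fun x : Q => y ◃⁻¹ x

/-- A quandle hom preserves the inverse action. -/
lemma isQdlHom_invAct {Q : Type} [Quandle Q] {f : Q → Q} (hf : IsQdlHom f) (a b : Q) :
    f (a ◃⁻¹ b) = f a ◃⁻¹ f b := by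
  have h := hf a (a ◃⁻¹ b)
  rw [Rack.right_inv] at h
  rw [h, Rack.left_inv]

/-- An open equivalence relation on a compact space has finite quotient. -/
lemma finite_quotient_of_isOpen {Q : Type} [TopologicalSpace Q] [CompactSpace Q]
    (α : Setoid Q) (h : IsOpen {p : Q × Q | α.r p.1 p.2}) : Finite (Quotient α) := by
  have hcl : ∀ a : Q, IsOpen {b | α.r a b} := fun a =>
    h.preimage (Continuous.prodMk_right a)
  obtain ⟨t, ht⟩ := IsCompact.elim_finite_subcover isCompact_univ
    (fun a : Q => {b | α.r a b}) hcl
    (fun x _ => Set.mem_iUnion.2 ⟨x, α.refl x⟩)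
  have hsurj : Function.Surjective (fun a : t => (⟦(a : Q)⟧ : Quotient α)) := by
    intro q
    induction q using Quotient.ind with
    | _ x =>
      obtain ⟨a, ha, hax⟩ := Set.mem_iUnion₂.1 (ht (Set.mem_univ x))
      exact ⟨⟨a, ha⟩, Quotient.sound hax⟩
  exact Finite.of_surjective _ hsurj

/-- In a compact topological quandle with only finitely many open congruences of each
index `n ≥ 1`, every open congruence contains an open congruence that is fully invariant
under all continuous endomorphisms. -/
theorem stmt_15 {Q : Type} [Quandle Q] [TopologicalSpace Q] [CompactSpace Q]
    (htq : IsTopQuandle Q)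
    (hfin : ∀ n : ℕ, 1 ≤ n →
      {α : Setoid Q | IsQdlCong α ∧ IsOpen {p : Q × Q | α.r p.1 p.2} ∧
        Nat.card (Quotient α) = n}.Finite)
    (α : Setoid Q) (hα : IsQdlCong α) (hαopen : IsOpen {p : Q × Q | α.r p.1 p.2}) :
    ∃ ρ : Setoid Q, IsQdlCong ρ ∧ IsOpen {p : Q × Q | ρ.r p.1 p.2} ∧
      (∀ f : Q → Q, IsQdlHom f → Continuous f → ∀ a b : Q, ρ.r a b → ρ.r (f a) (f b)) ∧
      (∀ a b : Q, ρ.r a b → α.r a b) := by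
  rcases isEmpty_or_nonempty Q with hQ | hQ
  · exact ⟨α, hα, hαopen, fun f _ _ a => (hQ.false a).elim, fun a b h => h⟩
  set n := Nat.card (Quotient α) with hn
  -- the (finite) set of open congruences of index between 1 and n
  set S : Set (Setoid Q) := {β | IsQdlCong β ∧ IsOpen {p : Q × Q | β.r p.1 p.2} ∧
      1 ≤ Nat.card (Quotient β) ∧ Nat.card (Quotient β) ≤ n} with hS
  have hSfin : S.Finite := by
    apply Set.Finite.subset
      (Set.Finite.biUnion (Set.finite_Icc 1 n) (fun k hk => hfin k hk.1))
    intro β hβ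
    exact Set.mem_iUnion₂.2 ⟨Nat.card (Quotient β), ⟨hβ.2.2.1, hβ.2.2.2⟩,
      hβ.1, hβ.2.1, rfl⟩
  -- the intersection congruence
  refine ⟨⟨fun a b => ∀ β ∈ S, β.r a b,
    ⟨fun a β _ => β.refl a, fun h β hβ => β.symm (h β hβ),
      fun h1 h2 β hβ => β.trans (h1 β hβ) (h2 β hβ)⟩⟩, ?_, ?_, ?_, ?_⟩
  · intro a b c d hab hcd
    exact ⟨fun β hβ => (hβ.1 a b c d (hab β hβ) (hcd β hβ)).1,
      fun β hβ => (hβ.1 a b c d (hab β hβ) (hcd β hβ)).2⟩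
  · have : {p : Q × Q | ∀ β ∈ S, β.r p.1 p.2} =
        ⋂ β ∈ S, {p : Q × Q | β.r p.1 p.2} := by
      ext p; simp [Set.mem_iInter₂]
    show IsOpen {p : Q × Q | ∀ β ∈ S, β.r p.1 p.2}
    rw [this]
    exact Set.Finite.isOpen_biInter hSfin (fun β hβ => hβ.2.1)
  · -- fully invariant under continuous endomorphisms
    intro f hf hfc a b hab β hβ
    set γ : Setoid Q := Setoid.comap f β with hγ
    have hγr : ∀ x y : Q, γ.r x y ↔ β.r (f x) (f y) := fun x y => Iff.rfl
    have hγS : γ ∈ S := by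
      refine ⟨?_, ?_, ?_, ?_⟩
      · intro x y z w hxy hzw
        have h1 := hβ.1 (f x) (f y) (f z) (f w) hxy hzw
        constructor
        · rw [hγr, hf, hf]; exact h1.1
        · rw [hγr, isQdlHom_invAct hf, isQdlHom_invAct hf]; exact h1.2
      · have : {p : Q × Q | γ.r p.1 p.2} =
            (Prod.map f f) ⁻¹' {p : Q × Q | β.r p.1 p.2} := rfl
        rw [this]
        exact hβ.2.1.preimage (hfc.prodMap hfc)
      all_goals {
        have hβfin : Finite (Quotient β) :=
          (Nat.card_pos_iff.1 (lt_of_lt_of_le Nat.zero_lt_one hβ.2.2.1)).2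
        let g : Quotient γ → Quotient β := fun q =>
          Quotient.liftOn q (fun x => (⟦f x⟧ : Quotient β))
            (fun x y h => Quotient.sound h)
        have hginj : Function.Injective g := by
          intro q1 q2
          induction q1 using Quotient.ind with
          | _ x =>
            induction q2 using Quotient.ind with
            | _ y =>
              intro hgq
              exact Quotient.sound ((hγr x y).2 (Quotient.exact hgq))
        have hle : Nat.card (Quotient γ) ≤ Nat.card (Quotient β) :=
          Nat.card_le_card_of_injective g hginj
        have hγfin : Finite (Quotient γ) := Finite.of_injective g hginj
        have hγpos : 1 ≤ Nat.card (Quotient γ) :=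
          Nat.card_pos_iff.2 ⟨⟨⟦Classical.arbitrary Q⟧⟩, hγfin⟩
        first
          | exact hγpos
          | exact le_trans hle hβ.2.2.2 }
    exact (hγr a b).1 (hab γ hγS)
  · intro a b h
    have hαfin : Finite (Quotient α) := finite_quotient_of_isOpen α hαopen
    have hαS : α ∈ S :=
      ⟨hα, hαopen, Nat.card_pos_iff.2 ⟨⟨⟦Classical.arbitrary Q⟧⟩, hαfin⟩, le_refl n⟩
    exact h α hαS
end
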